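/- (Stochastic one-step contraction estimate.) Let x^{(k+1)}, ŷ^{(k+1)} be generated by the deterministic prox updates with step sizes τ_{(k)} (scalar) and S_{(k)} = diag([S_{(k)}]_1,…,[S_{(k)}]_n), let y_i^{(k+1)} = ŷ_i^{(k+1)} with probability p_i > 0 and y_i^{(k+1)} = y_i^{(k)} otherwise (independently of the past), and let ȳ^{(k+1)} = y^{(k+1)} + θ_{(k)} Q (y^{(k+1)} − y^{(k)}). Let {v_i} be ESO parameters of S_{(k)}^{1/2} A τ_{(k)}^{1/2} and γ² = max_i v_i/p_i. Then for any saddle point (x♯, y♯): E^{(k,k−1)} { ‖x^{(k)} − x♯‖²_{τ_{(k)}^{-1}} + ‖y^{(k)} − y♯‖²_{Q S_{(k)}^{-1} + 2M(Q − I)} − 2 θ_{(k−1)} ⟨Q A(x^{(k)} − x♯), y^{(k)} − y^{(k−1)}⟩ + (γ θ_{(k−1)})² ‖y^{(k)} − y^{(k−1)}‖²_{Q S_{(k)}^{-1}} } ≥ E^{(k+1,k)} { ‖x^{(k+1)} − x♯‖²_{τ_{(k)}^{-1} + 2μ_g I} + ‖y^{(k+1)} − y♯‖²_{Q S_{(k)}^{-1}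 + 2M Q} − 2 ⟨Q A(x^{(k+1)} − x♯), y^{(k+1)} − y^{(k)}⟩ + ‖y^{(k+1)} − y^{(k)}‖²_{Q S_{(k)}^{-1}} }. -/

import Mathlib

/-!
For a fixed first sampling, the two proximal steps are three-point inequalities for strongly
convex functions; added to the subgradient inequalities of the saddle point they give the
deterministic primal-dual estimate. Averaging over the second sampling with inverse-probability
weights `p_i⁻¹` turns it into the weighted energy with the `(Q - I)` corrections. The
extrapolation leaves the coupling term `2θ⟪A (x^{(k)} - x^{(k+1)}), Q (y^{(k)} - y^{(k-1)})⟫`;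
Young's inequality bounds it by `τ θ² ‖A^* Q (y^{(k)} - y^{(k-1)})‖²`, and the ESO, applied to
`z_i = τ^{-1/2} S_i^{-1/2} p_i⁻¹ (ŷ_i^{(k)} - y_i^{(k-1)})`, bounds the mean of that by
`γ² θ² E ‖y^{(k)} - y^{(k-1)}‖²_{Q S⁻¹}`.
-/

open scoped RealInnerProductSpace

/-- Probability that index `i` belongs to the random set, for the sampling distribution `P`. -/
noncomputable def probOf {n : ℕ} (P : Finset (Fin n) → ℝ) (i : Fin n) : ℝ :=
  ∑ R : Finset (Fin n), if i ∈ R then P R else 0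

/-- `x = prox_τ^f(z)` for a scalar step size `τ > 0`. -/
def IsProxR {E : Type*} [NormedAddCommGroup E] [InnerProductSpace ℝ E]
    (τ : ℝ) (f : E → ℝ) (z x : E) : Prop :=
  ∀ u : E, (1 / (2 * τ)) * ‖x - z‖ ^ 2 + f x ≤ (1 / (2 * τ)) * ‖u - z‖ ^ 2 + f u

/-- `x` is the proximal point `prox_B^f(z)` for the step size operator `B` with inverse
`Binv`, i.e. the minimizer of `u ↦ ½‖u − z‖²_{B⁻¹} + f(u)`. -/
def IsProx {E : Type*} [NormedAddCommGroup E] [InnerProductSpace ℝ E]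
    (Binv : E →L[ℝ] E) (f : E → ℝ) (z x : E) : Prop :=
  ∀ u : E, (1 / 2) * ⟪Binv (x - z), x - z⟫ + f x ≤ (1 / 2) * ⟪Binv (u - z), u - z⟫ + f u

open Filter Topology

section ConvexAnalysis

variable {E : Type*} [NormedAddCommGroup E] [InnerProductSpace ℝ E]

lemma add_le_of_forall_add_one_sub_mul_le {a b c : ℝ}
    (h : ∀ t ∈ Set.Ioo (0 : ℝ) 1, a + (1 - t) * c ≤ b) : a + c ≤ b := by
  have hlim : Tendsto (fun t : ℝ => a + (1 - t) * c) (𝓝[>] 0) (𝓝 (a + c)) := by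
    have hcont : Continuous fun t : ℝ => a + (1 - t) * c := by fun_prop
    simpa using (hcont.tendsto 0).mono_left nhdsWithin_le_nhds
  exact le_of_tendsto hlim (by filter_upwards [Ioo_mem_nhdsGT one_pos] with t ht using h t ht)

lemma add_le_of_forall_le_of_le_chord {φ : E → ℝ} {x u : E} {c : ℝ} (hx : ∀ w, φ x ≤ φ w)
    (hφ : ∀ t ∈ Set.Ioo (0 : ℝ) 1,
      φ ((1 - t) • x + t • u) ≤ (1 - t) * φ x + t * φ u - t * (1 - t) * c) :
    φ x + c ≤ φ u := by
  refine add_le_of_forall_add_one_sub_mul_le fun t ht => le_of_mul_le_mul_left ?_ ht.1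
  linarith [(hx _).trans (hφ t ht)]

lemma inner_map_lineMap_self (T : E →L[ℝ] E) (a b : E) (t : ℝ) :
    ⟪T ((1 - t) • a + t • b), (1 - t) • a + t • b⟫ =
      (1 - t) * ⟪T a, a⟫ + t * ⟪T b, b⟫ - t * (1 - t) * ⟪T (a - b), a - b⟫ := by
  simp only [map_add, map_smul, map_sub, inner_add_left, inner_add_right,
    inner_sub_left, inner_sub_right, real_inner_smul_left, real_inner_smul_right]
  ring

lemma inner_map_sub_self_comm (T : E →L[ℝ] E) (a b : E) :
    ⟪T (a - b), a - b⟫ = ⟪T (b - a), b - a⟫ := by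
  rw [← neg_sub, map_neg, inner_neg_neg]

lemma StrongConvexOn.le_chord {μ : ℝ} {f : E → ℝ} (hf : StrongConvexOn Set.univ μ f)
    (x u : E) {t : ℝ} (ht : t ∈ Set.Ioo (0 : ℝ) 1) :
    f ((1 - t) • x + t • u) ≤ (1 - t) * f x + t * f u - t * (1 - t) * (μ / 2 * ‖u - x‖ ^ 2) := by
  have h := hf.2 (Set.mem_univ x) (Set.mem_univ u) (sub_nonneg.2 ht.2.le) ht.1.le (by ring)
  rw [norm_sub_rev]
  simp only [smul_eq_mul] at h
  linarith

lemma StrongConvexOn.add_le_of_subgradient {μ : ℝ} {f : E → ℝ} (hf : StrongConvexOn Set.univ μ f)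
    {x s : E} (hs : ∀ u, f x + ⟪s, u - x⟫ ≤ f u) (u : E) :
    f x + ⟪s, u - x⟫ + μ / 2 * ‖u - x‖ ^ 2 ≤ f u := by
  have h := add_le_of_forall_le_of_le_chord (φ := fun w => f w - ⟪s, w - x⟫) (x := x) (u := u)
    (c := μ / 2 * ‖u - x‖ ^ 2) (fun w => by simp only [sub_self, inner_zero_right]; linarith [hs w])
    fun t ht => by
      have hw : (1 - t) • x + t • u - x = t • (u - x) := by module
      simp only [hw, sub_self, inner_zero_right, real_inner_smul_right]
      linarith [hf.le_chord x u ht]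
  simp only [sub_self, inner_zero_right] at h
  linarith

lemma IsProx.add_le {T : E →L[ℝ] E} {μ : ℝ} {f : E → ℝ} {z x : E} (hx : IsProx T f z x)
    (hf : StrongConvexOn Set.univ μ f) (u : E) :
    1 / 2 * ⟪T (x - z), x - z⟫ + f x + (1 / 2 * ⟪T (u - x), u - x⟫ + μ / 2 * ‖u - x‖ ^ 2) ≤
      1 / 2 * ⟪T (u - z), u - z⟫ + f u := by
  refine add_le_of_forall_le_of_le_chord (φ := fun w => 1 / 2 * ⟪T (w - z), w - z⟫ + f w) hx
    fun t ht => ?_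
  have hw : (1 - t) • x + t • u - z = (1 - t) • (x - z) + t • (u - z) := by module
  rw [hw, inner_map_lineMap_self, sub_sub_sub_cancel_right, inner_map_sub_self_comm T x u]
  linarith [hf.le_chord x u ht]

lemma IsProxR.isProx {τ : ℝ} {f : E → ℝ} {z x : E} (hx : IsProxR τ f z x) :
    IsProx (τ⁻¹ • ContinuousLinearMap.id ℝ E) f z x := by
  intro u
  simp only [smul_apply, ContinuousLinearMap.id_apply, real_inner_smul_left,
    real_inner_self_eq_norm_sq]
  convert hx u using 2 <;> field_simp

lemma LinearMap.IsSymmetric.inner_map_sub_self {T : E →L[ℝ] E}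
    (hT : (T : E →ₗ[ℝ] E).IsSymmetric) (a d : E) :
    ⟪T (a - d), a - d⟫ = ⟪T a, a⟫ - 2 * ⟪T d, a⟫ + ⟪T d, d⟫ := by
  have h : ⟪T a, d⟫ = ⟪T d, a⟫ := by
    rw [real_inner_comm]; exact_mod_cast (hT d a).symm
  simp only [map_sub, inner_sub_left, inner_sub_right, h]
  ring

lemma LinearMap.IsSymmetric.of_comp_eq_id {S T : E →L[ℝ] E} (hS : (S : E →ₗ[ℝ] E).IsSymmetric)
    (hST : S.comp T = ContinuousLinearMap.id ℝ E) : (T : E →ₗ[ℝ] E).IsSymmetric := by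
  have hSTu : ∀ u, S (T u) = u := fun u => congrArg (· u) hST
  intro a b
  calc ⟪T a, b⟫ = ⟪T a, S (T b)⟫ := by rw [hSTu]
    _ = ⟪S (T a), T b⟫ := (hS (T a) (T b)).symm
    _ = ⟪a, T b⟫ := by rw [hSTu]

lemma IsProx.inner_map_sub_self_le_of_subgradient {T : E →L[ℝ] E}
    (hT : (T : E →ₗ[ℝ] E).IsSymmetric) {μ : ℝ} {f : E → ℝ} (hf : StrongConvexOn Set.univ μ f) {x₀ d x xs s : E}
    (hx : IsProx T f (x₀ + d) x) (hs : ∀ u, f xs + ⟪s, u - xs⟫ ≤ f u) :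
    ⟪T (x - xs), x - xs⟫ + 2 * μ * ‖x - xs‖ ^ 2 + ⟪T (x - x₀), x - x₀⟫ +
      2 * ⟪s - T d, x - xs⟫ ≤ ⟪T (x₀ - xs), x₀ - xs⟫ := by
  have hprox := hx.add_le hf xs
  have hsub := hf.add_le_of_subgradient hs x
  rw [show x - (x₀ + d) = (x - x₀) - d by abel, show xs - (x₀ + d) = (xs - x₀) - d by abel,
    hT.inner_map_sub_self (x - x₀) d, hT.inner_map_sub_self (xs - x₀) d,
    inner_map_sub_self_comm T xs x, inner_map_sub_self_comm T xs x₀, norm_sub_rev xs x] at hprox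
  have hcross : ⟪T d, x - x₀⟫ - ⟪T d, xs - x₀⟫ = ⟪T d, x - xs⟫ := by
    rw [← inner_sub_right, sub_sub_sub_cancel_right]
  rw [inner_sub_left]
  linarith

lemma two_mul_inner_sub_inv_mul_norm_sq_le {τ : ℝ} (hτ : 0 < τ) (θ : ℝ) (a u : E) :
    2 * θ * ⟪a, u⟫ - τ⁻¹ * ‖a‖ ^ 2 ≤ τ * θ ^ 2 * ‖u‖ ^ 2 := by
  have h : 0 ≤ τ⁻¹ * ‖a - (τ * θ) • u‖ ^ 2 := by positivity
  rw [norm_sub_sq_real, real_inner_smul_right, norm_smul, mul_pow, Real.norm_eq_abs, sq_abs] at h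
  have hexp : τ⁻¹ * (‖a‖ ^ 2 - 2 * (τ * θ * ⟪a, u⟫) + (τ * θ) ^ 2 * ‖u‖ ^ 2) =
      τ⁻¹ * ‖a‖ ^ 2 - 2 * θ * ⟪a, u⟫ + τ * θ ^ 2 * ‖u‖ ^ 2 := by
    field_simp
  linarith

end ConvexAnalysis

lemma sum_sum_mul_le_sum_mul_add {ι : Type*} [Fintype ι] {P B D Γ : ι → ℝ} {F : ι → ι → ℝ}
    (hP0 : ∀ R, 0 ≤ P R)
    (hF : ∀ R, ∑ R', P R' * F R R' ≤ B R + D R) (hD : ∑ R, P R * D R ≤ ∑ R, P R * Γ R) :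
    ∑ R, ∑ R', P R * P R' * F R R' ≤ ∑ R, P R * (B R + Γ R) := by
  calc ∑ R, ∑ R', P R * P R' * F R R' = ∑ R, P R * ∑ R', P R' * F R R' := by
        simp only [Finset.mul_sum, mul_assoc]
    _ ≤ ∑ R, P R * (B R + D R) :=
        Finset.sum_le_sum fun R _ => mul_le_mul_of_nonneg_left (hF R) (hP0 R)
    _ ≤ ∑ R, P R * (B R + Γ R) := by
        simp only [mul_add, Finset.sum_add_distrib]
        linarith

section Sampling

variable {n : ℕ} {P : Finset (Fin n) → ℝ}

lemma sum_mul_ite_mem (hP1 : ∑ R : Finset (Fin n), P R = 1) (i : Fin n) (a b : ℝ) :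
    ∑ R : Finset (Fin n), P R * (if i ∈ R then a else b) =
      probOf P i * a + (1 - probOf P i) * b := by
  have hcompl : ∑ R : Finset (Fin n), (if i ∈ R then 0 else P R) = 1 - probOf P i := by
    rw [← hP1, probOf, eq_sub_iff_add_eq, ← Finset.sum_add_distrib]
    exact Finset.sum_congr rfl fun R _ => by split_ifs <;> simp
  rw [← hcompl, probOf, Finset.sum_mul, Finset.sum_mul, ← Finset.sum_add_distrib]
  exact Finset.sum_congr rfl fun R _ => by split_ifs <;> simp

lemma sum_mul_sum_inv_probOf_mul (hP1 : ∑ R : Finset (Fin n), P R = 1)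
    (hp : ∀ i, probOf P i ≠ 0) {α : Fin n → Type*} (q : ∀ i, α i → ℝ) (a b : ∀ i, α i)
    (y : Finset (Fin n) → ∀ i, α i) (hy : ∀ R i, y R i = if i ∈ R then a i else b i) :
    ∑ R : Finset (Fin n), P R * ∑ i, (probOf P i)⁻¹ * q i (y R i) =
      ∑ i, (q i (a i) + ((probOf P i)⁻¹ - 1) * q i (b i)) := by
  simp only [Finset.mul_sum, hy, apply_ite (q _)]
  rw [Finset.sum_comm]
  refine Finset.sum_congr rfl fun i _ => ?_
  simp only [mul_left_comm (P _), ← Finset.mul_sum, sum_mul_ite_mem hP1]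
  field_simp [hp i]

end Sampling

section SquareRoot

variable {E : Type*} [NormedAddCommGroup E] [InnerProductSpace ℝ E] {S Sinv Ssqrt : E →L[ℝ] E}

lemma inv_comp_sqrt_comm (hSinvS : Sinv.comp S = ContinuousLinearMap.id ℝ E)
    (hSSinv : S.comp Sinv = ContinuousLinearMap.id ℝ E) (hSsqrt : Ssqrt.comp Ssqrt = S) :
    Sinv.comp Ssqrt = Ssqrt.comp Sinv := by
  have hcomm : Ssqrt.comp S = S.comp Ssqrt := by rw [← hSsqrt, ContinuousLinearMap.comp_assoc]
  calc Sinv.comp Ssqrt = Sinv.comp ((Ssqrt.comp S).comp Sinv) := by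
        rw [ContinuousLinearMap.comp_assoc, hSSinv, ContinuousLinearMap.comp_id]
    _ = (Sinv.comp S).comp (Ssqrt.comp Sinv) := by
        simp only [hcomm, ContinuousLinearMap.comp_assoc]
    _ = Ssqrt.comp Sinv := by rw [hSinvS, ContinuousLinearMap.id_comp]

lemma sqrt_inv_sqrt_apply (hSinvS : Sinv.comp S = ContinuousLinearMap.id ℝ E)
    (hSSinv : S.comp Sinv = ContinuousLinearMap.id ℝ E) (hSsqrt : Ssqrt.comp Ssqrt = S) (u : E) :
    Ssqrt (Sinv (Ssqrt u)) = u := by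
  have h : Ssqrt.comp (Sinv.comp Ssqrt) = ContinuousLinearMap.id ℝ E := by
    rw [inv_comp_sqrt_comm hSinvS hSSinv hSsqrt, ← ContinuousLinearMap.comp_assoc, hSsqrt, hSSinv]
  exact congrArg (· u) h

lemma norm_inv_sqrt_apply_sq [CompleteSpace E] (hSinvS : Sinv.comp S = ContinuousLinearMap.id ℝ E)
    (hSSinv : S.comp Sinv = ContinuousLinearMap.id ℝ E) (hSsqrt : Ssqrt.comp Ssqrt = S)
    (hSsqrt_sa : IsSelfAdjoint Ssqrt) (u : E) :
    ‖Sinv (Ssqrt u)‖ ^ 2 = ⟪Sinv u, u⟫ := by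
  have hcomm : Sinv (Ssqrt u) = Ssqrt (Sinv u) :=
    congrArg (· u) (inv_comp_sqrt_comm hSinvS hSSinv hSsqrt)
  rw [← real_inner_self_eq_norm_sq]
  nth_rewrite 1 [hcomm]
  have hsymm := hSsqrt_sa.isSymmetric (Sinv u) (Sinv (Ssqrt u))
  rw [ContinuousLinearMap.coe_coe] at hsymm
  rw [hsymm, sqrt_inv_sqrt_apply hSinvS hSSinv hSsqrt]

end SquareRoot

section PrimalDual

variable {ι : Type*} [Fintype ι] {X : Type*} [NormedAddCommGroup X] [InnerProductSpace ℝ X]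
  [CompleteSpace X] {Y : ι → Type*} [∀ i, NormedAddCommGroup (Y i)]
  [∀ i, InnerProductSpace ℝ (Y i)] [∀ i, CompleteSpace (Y i)]

lemma sum_mul_norm_sum_adjoint_sq_le (A : ∀ i, X →L[ℝ] Y i) {P : Finset ι → ℝ} {c : ι → ℝ}
    {τ : ℝ} (hτ : 0 < τ) {S Sinv Ssqrt : ∀ i, Y i →L[ℝ] Y i}
    (hSinvS : ∀ i, (Sinv i).comp (S i) = ContinuousLinearMap.id ℝ (Y i))
    (hSSinv : ∀ i, (S i).comp (Sinv i) = ContinuousLinearMap.id ℝ (Y i))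
    (hSsqrt : ∀ i, (Ssqrt i).comp (Ssqrt i) = S i) (hSsqrt_sa : ∀ i, IsSelfAdjoint (Ssqrt i))
    (hESO : ∀ z : ∀ i, Y i, ∑ R : Finset ι, P R *
        ‖∑ i ∈ R, Real.sqrt τ • (ContinuousLinearMap.adjoint ((Ssqrt i).comp (A i))) (z i)‖ ^ 2
      ≤ ∑ i, c i * ‖z i‖ ^ 2)
    (w : ∀ i, Y i) :
    ∑ R : Finset ι, P R * ‖∑ i ∈ R, ContinuousLinearMap.adjoint (A i) (w i)‖ ^ 2 ≤
      τ⁻¹ * ∑ i, c i * ⟪Sinv i (w i), w i⟫ := by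
  have hsqrt : Real.sqrt τ ≠ 0 := by positivity
  have hz := hESO fun i => (Real.sqrt τ)⁻¹ • Sinv i (Ssqrt i (w i))
  have hterm : ∀ i, Real.sqrt τ • (ContinuousLinearMap.adjoint ((Ssqrt i).comp (A i)))
      ((Real.sqrt τ)⁻¹ • Sinv i (Ssqrt i (w i))) = ContinuousLinearMap.adjoint (A i) (w i) := by
    intro i
    rw [ContinuousLinearMap.adjoint_comp, (hSsqrt_sa i).adjoint_eq, map_smul, smul_smul,
      mul_inv_cancel₀ hsqrt, one_smul, ContinuousLinearMap.comp_apply,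
      sqrt_inv_sqrt_apply (hSinvS i) (hSSinv i) (hSsqrt i)]
  have hnorm : ∀ i, ‖(Real.sqrt τ)⁻¹ • Sinv i (Ssqrt i (w i))‖ ^ 2 = τ⁻¹ * ⟪Sinv i (w i), w i⟫ := by
    intro i
    rw [norm_smul, mul_pow, norm_inv_sqrt_apply_sq (hSinvS i) (hSSinv i) (hSsqrt i) (hSsqrt_sa i),
      norm_inv, Real.norm_of_nonneg (Real.sqrt_nonneg τ), inv_pow, Real.sq_sqrt hτ.le]
  simp only [hterm, hnorm] at hz
  rw [Finset.mul_sum]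
  simpa only [mul_left_comm τ⁻¹] using hz

theorem pdhg_one_step_estimate (A : ∀ i, X →L[ℝ] Y i) {g : X → ℝ} {fstar : ∀ i, Y i → ℝ}
    {μg : ℝ} {μ : ι → ℝ} (hg : StrongConvexOn Set.univ μg g)
    (hfstar : ∀ i, StrongConvexOn Set.univ (μ i) (fstar i)) {τ : ℝ} (hτ : τ ≠ 0)
    {S Sinv : ∀ i, Y i →L[ℝ] Y i} (hSinv : ∀ i, (Sinv i : Y i →ₗ[ℝ] Y i).IsSymmetric)
    (hSinvS : ∀ i, (Sinv i).comp (S i) = ContinuousLinearMap.id ℝ (Y i))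
    {xs : X} {ys : ∀ i, Y i}
    (hgs : ∀ u, g xs + ⟪-(∑ i, ContinuousLinearMap.adjoint (A i) (ys i)), u - xs⟫ ≤ g u)
    (hfs : ∀ i u, fstar i (ys i) + ⟪A i xs, u - ys i⟫ ≤ fstar i u)
    {x x' : X} {y ybar y' : ∀ i, Y i}
    (hx' : IsProxR τ g (x - τ • ∑ i, ContinuousLinearMap.adjoint (A i) (ybar i)) x')
    (hy' : ∀ i, IsProx (Sinv i) (fstar i) (y i + S i (A i x')) (y' i)) :
    (τ⁻¹ + 2 * μg) * ‖x' - xs‖ ^ 2 + τ⁻¹ * ‖x' - x‖ ^ 2 +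
        2 * ∑ i, ⟪A i (x' - xs), ybar i - y i⟫ +
        ∑ i, (⟪Sinv i (y' i - ys i), y' i - ys i⟫ + 2 * μ i * ‖y' i - ys i‖ ^ 2 -
          2 * ⟪A i (x' - xs), y' i - y i⟫ + ⟪Sinv i (y' i - y i), y' i - y i⟫) ≤
      τ⁻¹ * ‖x - xs‖ ^ 2 + ∑ i, ⟪Sinv i (y i - ys i), y i - ys i⟫ := by
  set w := ∑ i, ContinuousLinearMap.adjoint (A i) (ybar i)
  have hscalar : ((τ⁻¹ • ContinuousLinearMap.id ℝ X : X →L[ℝ] X) : X →ₗ[ℝ] X).IsSymmetric := by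
    intro a b
    simp [real_inner_smul_left, real_inner_smul_right]
  have hprimal := IsProx.inner_map_sub_self_le_of_subgradient hscalar hg (x₀ := x) (d := -(τ • w))
    (by rw [← sub_eq_add_neg]; exact hx'.isProx) hgs
  simp only [smul_apply, ContinuousLinearMap.id_apply, real_inner_smul_left,
    real_inner_self_eq_norm_sq, smul_neg, smul_smul, inv_mul_cancel₀ hτ, one_smul,
    sub_neg_eq_add, neg_add_eq_sub] at hprimal
  have hprimal_cross : ⟪w - ∑ i, ContinuousLinearMap.adjoint (A i) (ys i), x' - xs⟫ =
      ∑ i, ⟪A i (x' - xs), ybar i - y i⟫ + ∑ i, ⟪A i (x' - xs), y i - ys i⟫ := by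
    rw [← Finset.sum_sub_distrib, sum_inner, ← Finset.sum_add_distrib]
    refine Finset.sum_congr rfl fun i _ => ?_
    rw [← map_sub, ContinuousLinearMap.adjoint_inner_left, real_inner_comm, ← inner_add_right,
      sub_add_sub_cancel]
  have hdual : ∑ i, (⟪Sinv i (y' i - ys i), y' i - ys i⟫ + 2 * μ i * ‖y' i - ys i‖ ^ 2 -
        2 * ⟪A i (x' - xs), y' i - y i⟫ + ⟪Sinv i (y' i - y i), y' i - y i⟫) -
        2 * ∑ i, ⟪A i (x' - xs), y i - ys i⟫ ≤ ∑ i, ⟪Sinv i (y i - ys i), y i - ys i⟫ := by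
    rw [Finset.mul_sum, ← Finset.sum_sub_distrib]
    refine Finset.sum_le_sum fun i _ => ?_
    have h := (hy' i).inner_map_sub_self_le_of_subgradient (hSinv i) (hfstar i) (hfs i)
    rw [show Sinv i (S i (A i x')) = A i x' from congrArg (· (A i x')) (hSinvS i)] at h
    have hcross : ⟪A i xs - A i x', y' i - ys i⟫ =
        -⟪A i (x' - xs), y' i - y i⟫ - ⟪A i (x' - xs), y i - ys i⟫ := by
      simp only [map_sub, inner_sub_left, inner_sub_right]
      ring
    linarith
  linarith

end PrimalDual

section SPDHG

variable {n : ℕ} {X : Type*} [NormedAddCommGroup X] [InnerProductSpace ℝ X] [CompleteSpace X]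
  {Y : Fin n → Type*} [∀ i, NormedAddCommGroup (Y i)] [∀ i, InnerProductSpace ℝ (Y i)]
  [∀ i, CompleteSpace (Y i)]

theorem sum_mul_spdhg_energy_le (A : ∀ i, X →L[ℝ] Y i) {g : X → ℝ} {fstar : ∀ i, Y i → ℝ}
    {μg : ℝ} {μ : Fin n → ℝ} (hg : StrongConvexOn Set.univ μg g)
    (hfstar : ∀ i, StrongConvexOn Set.univ (μ i) (fstar i)) {P : Finset (Fin n) → ℝ}
    (hP1 : ∑ R : Finset (Fin n), P R = 1) (hp : ∀ i, probOf P i ≠ 0) {τ : ℝ} (hτ : τ ≠ 0)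
    {S Sinv : ∀ i, Y i →L[ℝ] Y i} (hSinv : ∀ i, (Sinv i : Y i →ₗ[ℝ] Y i).IsSymmetric)
    (hSinvS : ∀ i, (Sinv i).comp (S i) = ContinuousLinearMap.id ℝ (Y i))
    {xs : X} {ys : ∀ i, Y i}
    (hgs : ∀ u, g xs + ⟪-(∑ i, ContinuousLinearMap.adjoint (A i) (ys i)), u - xs⟫ ≤ g u)
    (hfs : ∀ i u, fstar i (ys i) + ⟪A i xs, u - ys i⟫ ≤ fstar i u)
    {θ : ℝ} {x x' : X} {y₀ y ybar ŷ : ∀ i, Y i}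
    (hybar : ∀ i, ybar i = y i + (θ * (probOf P i)⁻¹) • (y i - y₀ i))
    (hx' : IsProxR τ g (x - τ • ∑ i, ContinuousLinearMap.adjoint (A i) (ybar i)) x')
    (hŷ : ∀ i, IsProx (Sinv i) (fstar i) (y i + S i (A i x')) (ŷ i))
    {y' : Finset (Fin n) → ∀ i, Y i} (hy' : ∀ R i, y' R i = if i ∈ R then ŷ i else y i) :
    ∑ R : Finset (Fin n), P R * ((τ⁻¹ + 2 * μg) * ‖x' - xs‖ ^ 2 +
        (∑ i, ((probOf P i)⁻¹ * ⟪Sinv i (y' R i - ys i), y' R i - ys i⟫ +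
          2 * μ i * (probOf P i)⁻¹ * ‖y' R i - ys i‖ ^ 2)) -
        2 * (∑ i, (probOf P i)⁻¹ * ⟪A i (x' - xs), y' R i - y i⟫) +
        (∑ i, (probOf P i)⁻¹ * ⟪Sinv i (y' R i - y i), y' R i - y i⟫)) ≤
      τ⁻¹ * ‖x - xs‖ ^ 2 +
        (∑ i, ((probOf P i)⁻¹ * ⟪Sinv i (y i - ys i), y i - ys i⟫ +
          2 * μ i * ((probOf P i)⁻¹ - 1) * ‖y i - ys i‖ ^ 2)) -
        2 * θ * (∑ i, (probOf P i)⁻¹ * ⟪A i (x - xs), y i - y₀ i⟫) +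
      (2 * θ * (∑ i, (probOf P i)⁻¹ * ⟪A i (x - x'), y i - y₀ i⟫) - τ⁻¹ * ‖x' - x‖ ^ 2) := by
  let q : ∀ i, Y i → ℝ := fun i v => ⟪Sinv i (v - ys i), v - ys i⟫ + 2 * μ i * ‖v - ys i‖ ^ 2 -
    2 * ⟪A i (x' - xs), v - y i⟫ + ⟪Sinv i (v - y i), v - y i⟫
  have hmean := sum_mul_sum_inv_probOf_mul hP1 hp q ŷ y y' hy'
  have hdual_rest : ∑ i, ((probOf P i)⁻¹ * ⟪Sinv i (y i - ys i), y i - ys i⟫ +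
      2 * μ i * ((probOf P i)⁻¹ - 1) * ‖y i - ys i‖ ^ 2) =
      ∑ i, ⟪Sinv i (y i - ys i), y i - ys i⟫ + ∑ i, ((probOf P i)⁻¹ - 1) * q i (y i) := by
    rw [← Finset.sum_add_distrib]
    exact Finset.sum_congr rfl fun i _ => by simp only [q, sub_self, inner_zero_right]; ring
  have hcross : 2 * θ * ∑ i, (probOf P i)⁻¹ * ⟪A i (x - x'), y i - y₀ i⟫ -
      2 * θ * ∑ i, (probOf P i)⁻¹ * ⟪A i (x - xs), y i - y₀ i⟫ =
      -(2 * ∑ i, ⟪A i (x' - xs), ybar i - y i⟫) := by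
    simp only [hybar, add_sub_cancel_left, real_inner_smul_right, map_sub, inner_sub_left,
      Finset.mul_sum, ← Finset.sum_sub_distrib, ← Finset.sum_neg_distrib]
    exact Finset.sum_congr rfl fun i _ => by ring
  have hpdhg := pdhg_one_step_estimate A hg hfstar hτ hSinv hSinvS hgs hfs hx' hŷ
  calc _ = ∑ R : Finset (Fin n), P R * ((τ⁻¹ + 2 * μg) * ‖x' - xs‖ ^ 2 +
        ∑ i, (probOf P i)⁻¹ * q i (y' R i)) := by
        refine Finset.sum_congr rfl fun R _ => congrArg (P R * ·) ?_
        rw [add_sub_assoc, add_assoc, Finset.mul_sum, ← Finset.sum_sub_distrib,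
          ← Finset.sum_add_distrib]
        exact congrArg _ (Finset.sum_congr rfl fun i _ => by simp only [q]; ring)
    _ = (τ⁻¹ + 2 * μg) * ‖x' - xs‖ ^ 2 + ∑ i, (q i (ŷ i) + ((probOf P i)⁻¹ - 1) * q i (y i)) := by
        rw [← hmean]
        simp only [mul_add, Finset.sum_add_distrib, ← Finset.sum_mul, hP1, one_mul]
    _ ≤ _ := by
        rw [Finset.sum_add_distrib, hdual_rest]
        linarith

lemma sum_mul_inner_sub_eq_inner_sum_adjoint (A : ∀ i, X →L[ℝ] Y i) {c : Fin n → ℝ} {a : X}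
    {R : Finset (Fin n)} {y₀ ŷ y : ∀ i, Y i} (hy : ∀ i, y i = if i ∈ R then ŷ i else y₀ i) :
    ∑ i, c i * ⟪A i a, y i - y₀ i⟫ =
      ⟪a, ∑ i ∈ R, ContinuousLinearMap.adjoint (A i) (c i • (ŷ i - y₀ i))⟫ := by
  rw [inner_sum, ← Fintype.sum_ite_mem R]
  refine Finset.sum_congr rfl fun i _ => ?_
  rw [hy]
  split_ifs
  · rw [ContinuousLinearMap.adjoint_inner_right, real_inner_smul_right]
  · rw [sub_self, inner_zero_right, mul_zero]

theorem sum_mul_coupling_le (A : ∀ i, X →L[ℝ] Y i) {P : Finset (Fin n) → ℝ}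
    (hP0 : ∀ R, 0 ≤ P R) (hP1 : ∑ R : Finset (Fin n), P R = 1) (hp : ∀ i, 0 < probOf P i)
    {τ : ℝ} (hτ : 0 < τ) {S Sinv Ssqrt : ∀ i, Y i →L[ℝ] Y i}
    (hSinvS : ∀ i, (Sinv i).comp (S i) = ContinuousLinearMap.id ℝ (Y i))
    (hSSinv : ∀ i, (S i).comp (Sinv i) = ContinuousLinearMap.id ℝ (Y i))
    (hSsqrt : ∀ i, (Ssqrt i).comp (Ssqrt i) = S i) (hSsqrt_sa : ∀ i, IsSelfAdjoint (Ssqrt i))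
    {v : Fin n → ℝ}
    (hESO : ∀ z : ∀ i, Y i, ∑ R : Finset (Fin n), P R *
        ‖∑ i ∈ R, Real.sqrt τ • (ContinuousLinearMap.adjoint ((Ssqrt i).comp (A i))) (z i)‖ ^ 2
      ≤ ∑ i, probOf P i * v i * ‖z i‖ ^ 2)
    {γsq : ℝ} (hγ : ∀ i, v i / probOf P i ≤ γsq) (θ : ℝ) (x : X) (x' : Finset (Fin n) → X)
    {y₀ ŷ : ∀ i, Y i} {y : Finset (Fin n) → ∀ i, Y i}
    (hy : ∀ R i, y R i = if i ∈ R then ŷ i else y₀ i) :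
    ∑ R : Finset (Fin n), P R * (2 * θ * (∑ i, (probOf P i)⁻¹ * ⟪A i (x - x' R), y R i - y₀ i⟫) -
        τ⁻¹ * ‖x' R - x‖ ^ 2) ≤
      ∑ R : Finset (Fin n), P R * (γsq * θ ^ 2 *
        (∑ i, (probOf P i)⁻¹ * ⟪Sinv i (y R i - y₀ i), y R i - y₀ i⟫)) := by
  let δ : ∀ i, Y i := fun i => (probOf P i)⁻¹ • (ŷ i - y₀ i)
  let u : Finset (Fin n) → X := fun R => ∑ i ∈ R, ContinuousLinearMap.adjoint (A i) (δ i)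
  have hyoung : ∀ R, 2 * θ * (∑ i, (probOf P i)⁻¹ * ⟪A i (x - x' R), y R i - y₀ i⟫) -
      τ⁻¹ * ‖x' R - x‖ ^ 2 ≤ τ * θ ^ 2 * ‖u R‖ ^ 2 := fun R => by
    rw [sum_mul_inner_sub_eq_inner_sum_adjoint A (hy R), norm_sub_rev]
    exact two_mul_inner_sub_inv_mul_norm_sq_le hτ θ _ _
  have hSinv_nonneg : ∀ i (w : Y i), 0 ≤ ⟪Sinv i w, w⟫ := fun i w => by
    rw [← norm_inv_sqrt_apply_sq (hSinvS i) (hSSinv i) (hSsqrt i) (hSsqrt_sa i)]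
    positivity
  have hmean := sum_mul_sum_inv_probOf_mul hP1 (fun i => (hp i).ne')
    (fun i w => ⟪Sinv i (w - y₀ i), w - y₀ i⟫) ŷ y₀ y hy
  simp only [sub_self, map_zero, inner_zero_right, mul_zero, add_zero] at hmean
  calc _ ≤ ∑ R : Finset (Fin n), P R * (τ * θ ^ 2 * ‖u R‖ ^ 2) :=
        Finset.sum_le_sum fun R _ => mul_le_mul_of_nonneg_left (hyoung R) (hP0 R)
    _ = τ * θ ^ 2 * ∑ R : Finset (Fin n), P R * ‖u R‖ ^ 2 := by
        rw [Finset.mul_sum]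
        exact Finset.sum_congr rfl fun R _ => by ring
    _ ≤ τ * θ ^ 2 * (τ⁻¹ * ∑ i, probOf P i * v i * ⟪Sinv i (δ i), δ i⟫) := by
        gcongr
        exact sum_mul_norm_sum_adjoint_sq_le A hτ hSinvS hSSinv hSsqrt hSsqrt_sa hESO δ
    _ = θ ^ 2 * ∑ i, v i / probOf P i * ⟪Sinv i (ŷ i - y₀ i), ŷ i - y₀ i⟫ := by
        rw [← mul_assoc, mul_right_comm τ, mul_inv_cancel₀ hτ.ne', one_mul]
        refine congrArg _ (Finset.sum_congr rfl fun i _ => ?_)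
        simp only [δ, map_smul, real_inner_smul_left, real_inner_smul_right]
        field_simp [(hp i).ne']
    _ ≤ θ ^ 2 * ∑ i, γsq * ⟪Sinv i (ŷ i - y₀ i), ŷ i - y₀ i⟫ := by
        gcongr with i
        · exact hSinv_nonneg i _
        · exact hγ i
    _ = _ := by
        simp only [mul_left_comm (P _) (γsq * θ ^ 2), ← Finset.mul_sum, hmean]
        ring

end SPDHG

theorem spdhg_stochastic_one_step_contraction_general {n : ℕ} (hn : 0 < n)
    (X : Type*) [NormedAddCommGroup X] [InnerProductSpace ℝ X] [CompleteSpace X]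
    (Y : Fin n → Type*) [∀ i, NormedAddCommGroup (Y i)] [∀ i, InnerProductSpace ℝ (Y i)]
    [∀ i, CompleteSpace (Y i)]
    (A : ∀ i, X →L[ℝ] Y i) (g : X → ℝ) (fstar : ∀ i, Y i → ℝ)
    -- strong convexity constants μ_g, μ_i ≥ 0
    (μg : ℝ) (μ : Fin n → ℝ)
    (hg : ConvexOn ℝ Set.univ (fun u => g u - μg / 2 * ‖u‖ ^ 2))
    (hfstar : ∀ i, ConvexOn ℝ Set.univ (fun u => fstar i u - μ i / 2 * ‖u‖ ^ 2))
    -- the sampling distribution: proper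
    (P : Finset (Fin n) → ℝ) (hP0 : ∀ R, 0 ≤ P R) (hP1 : ∑ R : Finset (Fin n), P R = 1)
    (hp : ∀ i, 0 < probOf P i)
    -- the step sizes τ_{(k)} (scalar) and [S_{(k)}]_i, with inverses and square roots
    (τ1 : ℝ) (hτ1 : 0 < τ1)
    (S1 S1inv S1sqrt : ∀ i, Y i →L[ℝ] Y i)
    (hS1 : ∀ i, IsSelfAdjoint (S1 i))
    (hS1sqrt : ∀ i, IsSelfAdjoint (S1sqrt i))
    (hS1sq : ∀ i, (S1sqrt i).comp (S1sqrt i) = S1 i)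
    (hS1inv : ∀ i, (S1inv i).comp (S1 i) = ContinuousLinearMap.id ℝ (Y i) ∧
      (S1 i).comp (S1inv i) = ContinuousLinearMap.id ℝ (Y i))
    -- the extrapolation parameters θ_{(k−1)} and θ_{(k)}
    (θprev : ℝ)
    -- ESO parameters {v_i} of S_{(k)}^{1/2} A τ_{(k)}^{1/2}
    (v : Fin n → ℝ)
    (hESO : ∀ z : ∀ i, Y i,
      ∑ R : Finset (Fin n), P R *
        ‖∑ i ∈ R, Real.sqrt τ1 •
          (ContinuousLinearMap.adjoint ((S1sqrt i).comp (A i))) (z i)‖ ^ 2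
      ≤ ∑ i, probOf P i * v i * ‖z i‖ ^ 2)
    -- a saddle point w♯ = (x♯, y♯)
    (xs : X) (ys : ∀ i, Y i)
    (hgs : ∀ u : X,
      g xs + ⟪-(∑ i, (ContinuousLinearMap.adjoint (A i)) (ys i)), u - xs⟫ ≤ g u)
    (hfs : ∀ i, ∀ u : Y i, fstar i (ys i) + ⟪A i xs, u - ys i⟫ ≤ fstar i u)
    -- the quantities at steps k−1 and k (conditioned on the past, 𝕊^{(k)} =: R)
    (xk : X) (ykm1 yhatk : ∀ i, Y i)
    (yk : Finset (Fin n) → ∀ i, Y i)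
    (hyk : ∀ R i, yk R i = if i ∈ R then yhatk i else ykm1 i)
    (ybark : Finset (Fin n) → ∀ i, Y i)
    (hybark : ∀ R i,
      ybark R i = yk R i + (θprev * (probOf P i)⁻¹) • (yk R i - ykm1 i))
    -- the updates of step k+1 (𝕊^{(k+1)} =: R')
    (x1 : Finset (Fin n) → X)
    (hx1 : ∀ R, IsProxR τ1 g
      (xk - τ1 • ∑ i, (ContinuousLinearMap.adjoint (A i)) (ybark R i)) (x1 R))
    (yhat1 : Finset (Fin n) → ∀ i, Y i)
    (hyhat1 : ∀ R i,
      IsProx (S1inv i) (fstar i) (yk R i + S1 i (A i (x1 R))) (yhat1 R i))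
    (y1 : Finset (Fin n) → Finset (Fin n) → ∀ i, Y i)
    (hy1 : ∀ R R' i, y1 R R' i = if i ∈ R' then yhat1 R i else yk R i) :
    let γsq : ℝ := Finset.univ.sup' (Finset.univ_nonempty_iff.mpr ⟨⟨0, hn⟩⟩)
      (fun i => v i / probOf P i)
    (∑ R : Finset (Fin n), ∑ R' : Finset (Fin n), P R * P R' *
        ((τ1⁻¹ + 2 * μg) * ‖x1 R - xs‖ ^ 2 +
          (∑ i, ((probOf P i)⁻¹ * ⟪S1inv i (y1 R R' i - ys i), y1 R R' i - ys i⟫ +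
            2 * μ i * (probOf P i)⁻¹ * ‖y1 R R' i - ys i‖ ^ 2)) -
          2 * (∑ i, (probOf P i)⁻¹ * ⟪A i (x1 R - xs), y1 R R' i - yk R i⟫) +
          (∑ i, (probOf P i)⁻¹ * ⟪S1inv i (y1 R R' i - yk R i), y1 R R' i - yk R i⟫))) ≤
      ∑ R : Finset (Fin n), P R *
        (τ1⁻¹ * ‖xk - xs‖ ^ 2 +
          (∑ i, ((probOf P i)⁻¹ * ⟪S1inv i (yk R i - ys i), yk R i - ys i⟫ +
            2 * μ i * ((probOf P i)⁻¹ - 1) * ‖yk R i - ys i‖ ^ 2)) -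
          2 * θprev * (∑ i, (probOf P i)⁻¹ * ⟪A i (xk - xs), yk R i - ykm1 i⟫) +
          γsq * θprev ^ 2 *
            (∑ i, (probOf P i)⁻¹ * ⟪S1inv i (yk R i - ykm1 i), yk R i - ykm1 i⟫)) := by
  intro γsq
  have hγ : ∀ i, v i / probOf P i ≤ γsq := fun i =>
    Finset.le_sup' (fun j => v j / probOf P j) (Finset.mem_univ i)
  have hS1inv_symm : ∀ i, (S1inv i : Y i →ₗ[ℝ] Y i).IsSymmetric := fun i =>
    (hS1 i).isSymmetric.of_comp_eq_id (hS1inv i).2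
  refine sum_sum_mul_le_sum_mul_add hP0 (fun R => ?_)
    (sum_mul_coupling_le A hP0 hP1 hp hτ1 (fun i => (hS1inv i).1) (fun i => (hS1inv i).2) hS1sq
      hS1sqrt hESO hγ θprev xk x1 hyk)
  exact sum_mul_spdhg_energy_le A (strongConvexOn_iff_convex.2 hg)
    (fun i => strongConvexOn_iff_convex.2 (hfstar i)) hP1 (fun i => (hp i).ne') hτ1.ne'
    hS1inv_symm (fun i => (hS1inv i).1) hgs hfs (hybark R) (hx1 R) (hyhat1 R) (hy1 R)

/-- Lemma 4, stochastic one-step contraction estimate.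
With `x^{(k+1)}, ŷ^{(k+1)}` generated by the deterministic prox updates with scalar step
`τ_{(k)}` and block steps `[S_{(k)}]_i`, `y_i^{(k+1)} = ŷ_i^{(k+1)}` with probability
`p_i` (else unchanged), `ȳ^{(k)} = y^{(k)} + θ_{(k−1)} Q (y^{(k)} − y^{(k−1)})`, ESO
parameters `{v_i}` of `S_{(k)}^{1/2} A τ_{(k)}^{1/2}` and `γ² = max_i v_i/p_i`, for any
saddle point `(x♯, y♯)` (everything conditioned on the history before step `k`, the
expectations running over the samplings `𝕊^{(k)}` resp. `(𝕊^{(k)}, 𝕊^{(k+1)})`):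
`E{‖x^{(k)}−x♯‖²_{τ_k⁻¹} + ‖y^{(k)}−y♯‖²_{QS_k⁻¹+2M(Q−I)}
   − 2θ_{k−1}⟨QA(x^{(k)}−x♯), y^{(k)}−y^{(k−1)}⟩ + (γθ_{k−1})²‖y^{(k)}−y^{(k−1)}‖²_{QS_k⁻¹}}
 ≥ E{‖x^{(k+1)}−x♯‖²_{τ_k⁻¹+2μ_g} + ‖y^{(k+1)}−y♯‖²_{QS_k⁻¹+2MQ}
   − 2⟨QA(x^{(k+1)}−x♯), y^{(k+1)}−y^{(k)}⟩ + ‖y^{(k+1)}−y^{(k)}‖²_{QS_k⁻¹}}`. -/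
theorem spdhg_stochastic_one_step_contraction {n : ℕ} (hn : 0 < n)
    (X : Type*) [NormedAddCommGroup X] [InnerProductSpace ℝ X] [CompleteSpace X]
    (Y : Fin n → Type*) [∀ i, NormedAddCommGroup (Y i)] [∀ i, InnerProductSpace ℝ (Y i)]
    [∀ i, CompleteSpace (Y i)]
    (A : ∀ i, X →L[ℝ] Y i) (g : X → ℝ) (fstar : ∀ i, Y i → ℝ)
    -- strong convexity constants μ_g, μ_i ≥ 0
    (μg : ℝ) (μ : Fin n → ℝ) (hμg : 0 ≤ μg) (hμ : ∀ i, 0 ≤ μ i)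
    (hg : ConvexOn ℝ Set.univ (fun u => g u - μg / 2 * ‖u‖ ^ 2))
    (hfstar : ∀ i, ConvexOn ℝ Set.univ (fun u => fstar i u - μ i / 2 * ‖u‖ ^ 2))
    -- the sampling distribution: proper
    (P : Finset (Fin n) → ℝ) (hP0 : ∀ R, 0 ≤ P R) (hP1 : ∑ R : Finset (Fin n), P R = 1)
    (hp : ∀ i, 0 < probOf P i)
    -- the step sizes τ_{(k)} (scalar) and [S_{(k)}]_i, with inverses and square roots
    (τ1 : ℝ) (hτ1 : 0 < τ1)
    (S1 S1inv S1sqrt : ∀ i, Y i →L[ℝ] Y i)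
    (hS1 : ∀ i, IsSelfAdjoint (S1 i)) (hS1pos : ∀ i, ∀ u : Y i, u ≠ 0 → 0 < ⟪S1 i u, u⟫)
    (hS1sqrt : ∀ i, IsSelfAdjoint (S1sqrt i))
    (hS1sq : ∀ i, (S1sqrt i).comp (S1sqrt i) = S1 i)
    (hS1inv : ∀ i, (S1inv i).comp (S1 i) = ContinuousLinearMap.id ℝ (Y i) ∧
      (S1 i).comp (S1inv i) = ContinuousLinearMap.id ℝ (Y i))
    -- the extrapolation parameters θ_{(k−1)} and θ_{(k)}
    (θprev θcur : ℝ)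
    -- ESO parameters {v_i} of S_{(k)}^{1/2} A τ_{(k)}^{1/2}
    (v : Fin n → ℝ)
    (hESO : ∀ z : ∀ i, Y i,
      ∑ R : Finset (Fin n), P R *
        ‖∑ i ∈ R, Real.sqrt τ1 •
          (ContinuousLinearMap.adjoint ((S1sqrt i).comp (A i))) (z i)‖ ^ 2
      ≤ ∑ i, probOf P i * v i * ‖z i‖ ^ 2)
    -- a saddle point w♯ = (x♯, y♯)
    (xs : X) (ys : ∀ i, Y i)
    (hgs : ∀ u : X,
      g xs + ⟪-(∑ i, (ContinuousLinearMap.adjoint (A i)) (ys i)), u - xs⟫ ≤ g u)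
    (hfs : ∀ i, ∀ u : Y i, fstar i (ys i) + ⟪A i xs, u - ys i⟫ ≤ fstar i u)
    -- the quantities at steps k−1 and k (conditioned on the past, 𝕊^{(k)} =: R)
    (xk : X) (ykm1 yhatk : ∀ i, Y i)
    (yk : Finset (Fin n) → ∀ i, Y i)
    (hyk : ∀ R i, yk R i = if i ∈ R then yhatk i else ykm1 i)
    (ybark : Finset (Fin n) → ∀ i, Y i)
    (hybark : ∀ R i,
      ybark R i = yk R i + (θprev * (probOf P i)⁻¹) • (yk R i - ykm1 i))
    -- the updates of step k+1 (𝕊^{(k+1)} =: R')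
    (x1 : Finset (Fin n) → X)
    (hx1 : ∀ R, IsProxR τ1 g
      (xk - τ1 • ∑ i, (ContinuousLinearMap.adjoint (A i)) (ybark R i)) (x1 R))
    (yhat1 : Finset (Fin n) → ∀ i, Y i)
    (hyhat1 : ∀ R i,
      IsProx (S1inv i) (fstar i) (yk R i + S1 i (A i (x1 R))) (yhat1 R i))
    (y1 : Finset (Fin n) → Finset (Fin n) → ∀ i, Y i)
    (hy1 : ∀ R R' i, y1 R R' i = if i ∈ R' then yhat1 R i else yk R i) :
    let γsq : ℝ := Finset.univ.sup' (Finset.univ_nonempty_iff.mpr ⟨⟨0, hn⟩⟩)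
      (fun i => v i / probOf P i)
    (∑ R : Finset (Fin n), ∑ R' : Finset (Fin n), P R * P R' *
        ((τ1⁻¹ + 2 * μg) * ‖x1 R - xs‖ ^ 2 +
          (∑ i, ((probOf P i)⁻¹ * ⟪S1inv i (y1 R R' i - ys i), y1 R R' i - ys i⟫ +
            2 * μ i * (probOf P i)⁻¹ * ‖y1 R R' i - ys i‖ ^ 2)) -
          2 * (∑ i, (probOf P i)⁻¹ * ⟪A i (x1 R - xs), y1 R R' i - yk R i⟫) +
          (∑ i, (probOf P i)⁻¹ * ⟪S1inv i (y1 R R' i - yk R i), y1 R R' i - yk R i⟫))) ≤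
      ∑ R : Finset (Fin n), P R *
        (τ1⁻¹ * ‖xk - xs‖ ^ 2 +
          (∑ i, ((probOf P i)⁻¹ * ⟪S1inv i (yk R i - ys i), yk R i - ys i⟫ +
            2 * μ i * ((probOf P i)⁻¹ - 1) * ‖yk R i - ys i‖ ^ 2)) -
          2 * θprev * (∑ i, (probOf P i)⁻¹ * ⟪A i (xk - xs), yk R i - ykm1 i⟫) +
          γsq * θprev ^ 2 *
            (∑ i, (probOf P i)⁻¹ * ⟪S1inv i (yk R i - ykm1 i), yk R i - ykm1 i⟫)) :=
  spdhg_stochastic_one_step_contraction_general hn X Y A g fstar μg μ hg hfstar P hP0 hP1 hp τ1 hτ1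
    S1 S1inv S1sqrt hS1 hS1sqrt hS1sq hS1inv θprev v hESO xs ys hgs hfs xk ykm1 yhatk yk hyk ybark
    hybark x1 hx1 yhat1 hyhat1 y1 hy1
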